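/- For the algebra A_2 and each j ∈ ω, the set R^j = {r_i^j : i ∈ ω} is contained in a single class of [1]_j, the j-th term of the derived series of A_2 with respect to the binary term condition commutator. -/
import Mathlib


/-- The carrier of the algebra `𝔸₂ = ⟨A₂; t⟩`: `O = {oᵢʲ}`, `R = {rᵢʲ}`, and
`G` the set of formal products, so that `A2.g : A2² → G` is a fixed injection. -/
inductive A2 : Type where
  | o (i j : ℕ) : A2
  | r (i j : ℕ) : A2
  | g (x y : A2) : A2
deriving DecidableEq

/-- The binary operation `t` of `𝔸₂`:
`t(r₄ᵢʲ, r₄ᵢʲ) = t(r₄ᵢʲ, r₄ᵢ₊₂ʲ) = oᵢʲ`, `t(r₄ᵢ₊₂ʲ, r₄ᵢʲ) = rᵢʲ⁺¹`,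
`t(r₄ᵢ₊₂ʲ, r₄ᵢ₊₂ʲ) = rᵢ₊₁ʲ⁺¹`, and otherwise `t(x,y) = s(x,y)` for a fixed
injection `s : A₂² → G`. -/
def t2 : A2 → A2 → A2 :=
  fun x y =>
    match x, y with
    | .r a j, .r b l =>
        if l = j ∧ a % 4 = 0 ∧ (b = a ∨ b = a + 2) then .o (a / 4) j
        else if l = j ∧ a % 4 = 2 ∧ b + 2 = a then .r (a / 4) (j + 1)
        else if l = j ∧ a % 4 = 2 ∧ b = a then .r (a / 4 + 1) (j + 1)
        else .g x y
    | x, y => .g x y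

/-- A congruence of `𝔸₂`: an equivalence relation compatible with `t`. -/
def IsCon2 (θ : A2 → A2 → Prop) : Prop :=
  Equivalence θ ∧ ∀ a b c d : A2, θ a b → θ c d → θ (t2 a c) (t2 b d)

/-- `M(α,β)`: the subalgebra of `𝔸₂⁴` generated by
`{(x,x;y,y) : (x,y) ∈ α} ∪ {(c,d;c,d) : (c,d) ∈ β}`.
A quadruple `(h₁,h₂,h₃,h₄)` represents the square with columns `(h₁,h₂)`, `(h₃,h₄)`. -/
inductive Msq (α β : A2 → A2 → Prop) : A2 × A2 × A2 × A2 → Prop where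
  | genA (x y : A2) : α x y → Msq α β (x, x, y, y)
  | genB (c d : A2) : β c d → Msq α β (c, d, c, d)
  | app (a₁ a₂ a₃ a₄ b₁ b₂ b₃ b₄ : A2) :
      Msq α β (a₁, a₂, a₃, a₄) → Msq α β (b₁, b₂, b₃, b₄) →
      Msq α β (t2 a₁ b₁, t2 a₂ b₂, t2 a₃ b₃, t2 a₄ b₄)

/-- The centrality condition `C(α,β;δ)`: for every square in `M(α,β)`, if the
support column is a `δ`-pair then so is the pivot column. -/
def Cen (α β δ : A2 → A2 → Prop) : Prop :=
  ∀ h₁ h₂ h₃ h₄ : A2, Msq α β (h₁, h₂, h₃, h₄) → δ h₁ h₂ → δ h₃ h₄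

/-- The binary term condition commutator `[α,β]`: the least congruence `δ`
such that `C(α,β;δ)` holds. -/
def comm2 (α β : A2 → A2 → Prop) : A2 → A2 → Prop :=
  fun a b => ∀ δ : A2 → A2 → Prop, IsCon2 δ → Cen α β δ → δ a b

/-- The derived series `[1]₀ = 1`, `[1]_{j+1} = [[1]_j, [1]_j]`. -/
def dser2 : ℕ → A2 → A2 → Prop
  | 0 => fun _ _ => True
  | j + 1 => comm2 (dser2 j) (dser2 j)

lemma t2_oo (i j : ℕ) : t2 (A2.r (4*i) j) (A2.r (4*i) j) = A2.o i j := by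
  simp only [t2]
  rw [if_pos ⟨trivial, by omega, Or.inl trivial⟩]
  congr 1; omega

lemma t2_oo2 (i j : ℕ) : t2 (A2.r (4*i) j) (A2.r (4*i+2) j) = A2.o i j := by
  simp only [t2]
  rw [if_pos ⟨trivial, by omega, Or.inr trivial⟩]
  congr 1; omega

lemma t2_r1 (i j : ℕ) : t2 (A2.r (4*i+2) j) (A2.r (4*i) j) = A2.r i (j+1) := by
  simp only [t2]
  rw [if_neg (by omega), if_pos ⟨trivial, by omega, trivial⟩]
  congr 1; omega

lemma t2_r2 (i j : ℕ) : t2 (A2.r (4*i+2) j) (A2.r (4*i+2) j) = A2.r (i+1) (j+1) := by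
  simp only [t2]
  rw [if_neg (by omega), if_neg (by omega), if_pos ⟨trivial, by omega, trivial⟩]
  congr 1; omega

/-- For each `j`, the set `Rʲ = {rᵢʲ : i ∈ ω}` is contained in a single
`[1]_j`-class. -/
theorem stmt7 (j : ℕ) : ∀ i i' : ℕ, dser2 j (A2.r i j) (A2.r i' j) := by
  induction j with
  | zero => intro i i'; trivial
  | succ j ih =>
    intro i i'
    intro δ hδ hcen
    have step : ∀ k : ℕ, δ (A2.r k (j+1)) (A2.r (k+1) (j+1)) := by
      intro k
      have hm : Msq (dser2 j) (dser2 j)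
          (t2 (A2.r (4*k) j) (A2.r (4*k) j),
           t2 (A2.r (4*k) j) (A2.r (4*k+2) j),
           t2 (A2.r (4*k+2) j) (A2.r (4*k) j),
           t2 (A2.r (4*k+2) j) (A2.r (4*k+2) j)) :=
        Msq.app _ _ _ _ _ _ _ _
          (Msq.genA _ _ (ih (4*k) (4*k+2)))
          (Msq.genB _ _ (ih (4*k) (4*k+2)))
      rw [t2_oo, t2_oo2, t2_r1, t2_r2] at hm
      exact hcen _ _ _ _ hm (hδ.1.refl _)
    have chain : ∀ n : ℕ, δ (A2.r 0 (j+1)) (A2.r n (j+1)) := by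
      intro n
      induction n with
      | zero => exact hδ.1.refl _
      | succ n ihn => exact hδ.1.trans ihn (step n)
    exact hδ.1.trans (hδ.1.symm (chain i)) (chain i')
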